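/- Let K be a field of characteristic zero and let (x, y, z) ∈ K³ with (x, y, z) ≠ (0, 0, 0). With F1 = 5x^3 − x y^2 + 8x^2 z, F2 = 5x^2 y − y^3 + 8x y z, F3 = −2x^3 − 5x^2 z + y^2 z, one has F1 = F2 = F3 = 0 if and only if (x, y, z) is a nonzero scalar multiple of one of the five triples (0,0,1), (−2,−2,1), (−2,2,1), (2,6,1), (2,−6,1). (Equivalently, the indeterminacy locus of ι_q is exactly {q, q1, q2, q3, q4}.) -/
import Mathlib


namespace Stmt4

/-- First component of the cubic involution `ι_q`. -/
def F1 {K : Type*} [Field K] (x y z : K) : K := 5 * x ^ 3 - x * y ^ 2 + 8 * x ^ 2 * z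

/-- Second component of the cubic involution `ι_q`. -/
def F2 {K : Type*} [Field K] (x y z : K) : K := 5 * x ^ 2 * y - y ^ 3 + 8 * x * y * z

/-- Third component of the cubic involution `ι_q`. -/
def F3 {K : Type*} [Field K] (x y z : K) : K := -2 * x ^ 3 - 5 * x ^ 2 * z + y ^ 2 * z

/-- The indeterminacy locus of the cubic involution `ι_q = [F1, F2, F3]` is exactly the five
points `q = [0,0,1]`, `q1 = [-2,-2,1]`, `q2 = [-2,2,1]`, `q3 = [2,6,1]`, `q4 = [2,-6,1]`. -/
theorem indeterminacy_locus_of_iota_q {K : Type*} [Field K] [CharZero K] (x y z : K)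
    (hxyz : (x, y, z) ≠ (0, 0, 0)) :
    (F1 x y z = 0 ∧ F2 x y z = 0 ∧ F3 x y z = 0) ↔
    ∃ c : K, c ≠ 0 ∧
      ((x, y, z) = (c * 0, c * 0, c * 1) ∨
       (x, y, z) = (c * (-2), c * (-2), c * 1) ∨
       (x, y, z) = (c * (-2), c * 2, c * 1) ∨
       (x, y, z) = (c * 2, c * 6, c * 1) ∨
       (x, y, z) = (c * 2, c * (-6), c * 1)) := by
  unfold F1 F2 F3
  constructor
  · rintro ⟨h1, h2, h3⟩
    by_cases hx : x = 0
    · subst hx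
      have hy : y = 0 := by
        have : y ^ 3 = 0 := by linear_combination -h2
        exact pow_eq_zero_iff (by norm_num) |>.mp this
      subst hy
      have hz : z ≠ 0 := by
        intro hz; exact hxyz (by simp [hz])
      exact ⟨z, hz, Or.inl (by simp)⟩
    · -- G = 0
      have hG : 5 * x ^ 2 - y ^ 2 + 8 * x * z = 0 := by
        have : x * (5 * x ^ 2 - y ^ 2 + 8 * x * z) = 0 := by linear_combination h1
        rcases mul_eq_zero.mp this with h | h
        · exact absurd h hx
        · exact h
      have hy2 : y ^ 2 = 5 * x ^ 2 + 8 * x * z := by linear_combination -hG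
      have hxz : (x - 2 * z) * (x + 2 * z) = 0 := by
        have : -2 * x * ((x - 2 * z) * (x + 2 * z)) = 0 := by
          linear_combination h3 + z * hG
        rcases mul_eq_zero.mp this with h | h
        · exact absurd (by linear_combination (-(1:K)/2) * h) hx
        · exact h
      have hz : z ≠ 0 := by
        intro hz
        rw [hz] at hxz
        have hx2 : x ^ 2 = 0 := by linear_combination hxz
        exact hx (pow_eq_zero_iff (by norm_num) |>.mp hx2)
      rcases mul_eq_zero.mp hxz with h | h
      · -- x = 2z, y² = 36z²
        have hxe : x = 2 * z := by linear_combination h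
        have hy36 : (y - 6 * z) * (y + 6 * z) = 0 := by
          rw [hxe] at hy2; linear_combination hy2
        rcases mul_eq_zero.mp hy36 with hy | hy
        · exact ⟨z, hz, Or.inr (Or.inr (Or.inr (Or.inl (by
            simp only [Prod.mk.injEq]
            refine ⟨by linear_combination hxe, by linear_combination hy, by ring⟩))))⟩
        · exact ⟨z, hz, Or.inr (Or.inr (Or.inr (Or.inr (by
            simp only [Prod.mk.injEq]
            refine ⟨by linear_combination hxe, by linear_combination hy, by ring⟩))))⟩
      · -- x = -2z, y² = 4z²
        have hxe : x = -2 * z := by linear_combination h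
        have hy4 : (y - 2 * z) * (y + 2 * z) = 0 := by
          rw [hxe] at hy2; linear_combination hy2
        rcases mul_eq_zero.mp hy4 with hy | hy
        · exact ⟨z, hz, Or.inr (Or.inr (Or.inl (by
            simp only [Prod.mk.injEq]
            refine ⟨by linear_combination hxe, by linear_combination hy, by ring⟩)))⟩
        · exact ⟨z, hz, Or.inr (Or.inl (by
            simp only [Prod.mk.injEq]
            refine ⟨by linear_combination hxe, by linear_combination hy, by ring⟩))⟩
  · rintro ⟨c, hc, h | h | h | h | h⟩ <;>
      (simp only [Prod.mk.injEq] at h;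
       obtain ⟨hx, hy, hz⟩ := h;
       subst hx; subst hy; subst hz; refine ⟨by ring, by ring, by ring⟩)

end Stmt4
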